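/- Let S ⊆ [m] × [n] be a nonempty finite set, and define the 3-way index set S' ⊆ ({1,2} × [m]) × ({1,2} × [n]) × S by S' = { ((ε,p), (ε,q), (p,q)) : ε ∈ {1,2}, (p,q) ∈ S }. Then there exist j ∈ {1,2,3} and a proper j-coordinate split (a,ب) of {1,2,3} such that S' is a coordinate toric fiber product along coordinate j with respect to that split if and only if either the map (p,q) ↦ p is injective on S or the map (p,q) ↦ q is injective on S (equivalently, the bipartite graph G_S is a disjoint union of stars whose central vertices all correspond to the same one of the two variables). -/

import Mathlib

/-- For a `3`-way index set with coordinates indexed by `Fin 3`, the tuples `s` and `t` agree on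
all coordinates in `a`. -/
def agreeOn {α β γ : Type*} (a : Finset (Fin 3)) (s t : α × β × γ) : Prop :=
  ((0 : Fin 3) ∈ a → s.1 = t.1) ∧ ((1 : Fin 3) ∈ a → s.2.1 = t.2.1) ∧
    ((2 : Fin 3) ∈ a → s.2.2 = t.2.2)

/-- A `3`-way index set `T` is a *coordinate toric fiber product* with respect to the coordinate
sets `(a, b)` if `T = { s | π_a(s) ∈ π_a(T) and π_b(s) ∈ π_b(T) }`. -/
def IsCTFP3 {α β γ : Type*} (T : Finset (α × β × γ)) (a b : Finset (Fin 3)) : Prop :=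
  ∀ s : α × β × γ, s ∈ T ↔ ((∃ t ∈ T, agreeOn a s t) ∧ (∃ u ∈ T, agreeOn b s u))

/-- The `3`-way index set of the (modified) Lawrence lift of `S ⊆ [m] × [n]`:
`S' = { ((ε,p), (ε,q), (p,q)) : ε ∈ {1,2}, (p,q) ∈ S }`. -/
def lawrenceLift {m n : ℕ} (S : Finset (Fin m × Fin n)) :
    Finset ((Fin 2 × Fin m) × (Fin 2 × Fin n) × {p : Fin m × Fin n // p ∈ S}) :=
  Finset.univ.image fun e : Fin 2 × {p : Fin m × Fin n // p ∈ S} =>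
    ((e.1, e.2.1.1), (e.1, e.2.1.2), e.2)

/-! A proper split of three coordinates is `({j, x}, {j, y})` with `{j, x, y} = {0, 1, 2}`, and
being a cTFP is symmetric in the two halves, so only three splits matter. Gluing along the
`(p, q)` coordinate fails as soon as `S ≠ ∅`: `((1, p), (2, q), (p, q))` is glued from the two
copies of `(p, q)`. Gluing along `(ε, p)` produces `((ε, p), (ε, q'), (p, q))` from `(p, q')` and
`(p, q)`, so it holds exactly when no two elements of `S` share their first coordinate;
symmetrically for `(ε, q)`. -/

open Finset

section CTFP

variable {α β γ : Type*} {T : Finset (α × β × γ)} {a b : Finset (Fin 3)}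

lemma agreeOn_refl (a : Finset (Fin 3)) (s : α × β × γ) : agreeOn a s s :=
  ⟨fun _ => rfl, fun _ => rfl, fun _ => rfl⟩

lemma isCTFP3_iff : IsCTFP3 T a b ↔
    ∀ s, (∃ t ∈ T, agreeOn a s t) → (∃ u ∈ T, agreeOn b s u) → s ∈ T := by
  refine ⟨fun h s ht hu => (h s).2 ⟨ht, hu⟩, fun h s => ⟨fun hs => ?_, fun ⟨ht, hu⟩ => h s ht hu⟩⟩
  exact ⟨⟨s, hs, agreeOn_refl a s⟩, ⟨s, hs, agreeOn_refl b s⟩⟩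

lemma IsCTFP3.symm (h : IsCTFP3 T a b) : IsCTFP3 T b a :=
  fun s => (h s).trans and_comm

end CTFP

lemma exists_properSplit_iff (P : Finset (Fin 3) → Finset (Fin 3) → Prop)
    (hP : ∀ a b, P a b → P b a) :
    (∃ (j : Fin 3) (a : Finset (Fin 3)), {j} ⊂ a ∧ a ⊂ univ ∧ P a ((univ \ a) ∪ {j})) ↔
      P {0, 1} {0, 2} ∨ P {0, 1} {1, 2} ∨ P {0, 2} {1, 2} := by
  constructor
  · rintro ⟨j, a, hja, hau, h⟩
    have hsplits : ∀ (j : Fin 3) (a : Finset (Fin 3)), {j} ⊂ a → a ⊂ univ →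
        (a, (univ \ a) ∪ {j}) ∈ [({0, 1}, {0, 2}), ({0, 2}, {0, 1}), ({0, 1}, {1, 2}),
          ({1, 2}, {0, 1}), ({0, 2}, {1, 2}), ({1, 2}, {0, 2})] := by
      decide
    have hab := hsplits j a hja hau
    simp only [List.mem_cons, Prod.mk.injEq, List.not_mem_nil, or_false] at hab
    rcases hab with ⟨rfl, hb⟩ | ⟨rfl, hb⟩ | ⟨rfl, hb⟩ | ⟨rfl, hb⟩ | ⟨rfl, hb⟩ | ⟨rfl, hb⟩ <;>
      rw [hb] at h
    exacts [Or.inl h, Or.inl (hP _ _ h), Or.inr (Or.inl h), Or.inr (Or.inl (hP _ _ h)),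
      Or.inr (Or.inr h), Or.inr (Or.inr (hP _ _ h))]
  · rintro (h | h | h)
    exacts [⟨0, {0, 1}, by decide, by decide, by convert h using 2; decide⟩,
      ⟨1, {0, 1}, by decide, by decide, by convert h using 2; decide⟩,
      ⟨2, {0, 2}, by decide, by decide, by convert h using 2; decide⟩]

section LawrenceLift

variable {m n : ℕ} {S : Finset (Fin m × Fin n)}

lemma mem_lawrenceLift
    (s : (Fin 2 × Fin m) × (Fin 2 × Fin n) × {p : Fin m × Fin n // p ∈ S}) :
    s ∈ lawrenceLift S ↔ s.1.1 = s.2.1.1 ∧ s.1.2 = s.2.2.val.1 ∧ s.2.1.2 = s.2.2.val.2 := by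
  obtain ⟨⟨ε, p⟩, ⟨ε', q⟩, ⟨⟨p', q'⟩, h⟩⟩ := s
  simp only [lawrenceLift, mem_image, mem_univ, true_and, Prod.exists, Prod.mk.injEq,
    Subtype.exists, Subtype.mk.injEq]
  constructor
  · rintro ⟨ε, p, q, -, ⟨rfl, rfl⟩, ⟨rfl, rfl⟩, rfl, rfl⟩
    exact ⟨rfl, rfl, rfl⟩
  · rintro ⟨rfl, rfl, rfl⟩
    exact ⟨ε, p, q, h, ⟨rfl, rfl⟩, ⟨rfl, rfl⟩, rfl, rfl⟩

lemma mk_mem_lawrenceLift (ε : Fin 2) {p : Fin m} {q : Fin n} (h : (p, q) ∈ S) :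
    ((ε, p), (ε, q), ⟨(p, q), h⟩) ∈ lawrenceLift S :=
  (mem_lawrenceLift _).2 ⟨rfl, rfl, rfl⟩

lemma isCTFP3_lawrenceLift_iff_injOn_fst :
    IsCTFP3 (lawrenceLift S) {0, 1} {0, 2} ↔ Set.InjOn Prod.fst (S : Set (Fin m × Fin n)) := by
  rw [isCTFP3_iff]
  constructor
  · rintro h ⟨p, q⟩ hpq ⟨p', q'⟩ hpq' (rfl : p = p')
    have hs := h ((0, p), (0, q'), ⟨(p, q), hpq⟩)
      ⟨_, mk_mem_lawrenceLift 0 hpq', fun _ => rfl, fun _ => rfl, fun h => absurd h (by decide)⟩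
      ⟨_, mk_mem_lawrenceLift 0 hpq, fun _ => rfl, fun h => absurd h (by decide), fun _ => rfl⟩
    exact Prod.ext rfl ((mem_lawrenceLift _).1 hs).2.2.symm
  · rintro hinj ⟨x, y, z⟩ ⟨t, ht, htx, hty, -⟩ ⟨u, hu, hux, -, huz⟩
    obtain ⟨rfl, rfl, rfl⟩ : x = t.1 ∧ y = t.2.1 ∧ z = u.2.2 :=
      ⟨htx (by decide), hty (by decide), huz (by decide)⟩
    obtain ⟨htε, htp, htq⟩ := (mem_lawrenceLift t).1 ht
    obtain ⟨-, hup, -⟩ := (mem_lawrenceLift u).1 hu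
    have htu : t.2.2.val = u.2.2.val :=
      hinj t.2.2.2 u.2.2.2 (by rw [← htp, ← hup, hux (by decide)])
    exact (mem_lawrenceLift _).2 ⟨htε, by rw [hux (by decide), hup], by rw [htq, htu]⟩

lemma isCTFP3_lawrenceLift_iff_injOn_snd :
    IsCTFP3 (lawrenceLift S) {0, 1} {1, 2} ↔ Set.InjOn Prod.snd (S : Set (Fin m × Fin n)) := by
  rw [isCTFP3_iff]
  constructor
  · rintro h ⟨p, q⟩ hpq ⟨p', q'⟩ hpq' (rfl : q = q')
    have hs := h ((0, p'), (0, q), ⟨(p, q), hpq⟩)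
      ⟨_, mk_mem_lawrenceLift 0 hpq', fun _ => rfl, fun _ => rfl, fun h => absurd h (by decide)⟩
      ⟨_, mk_mem_lawrenceLift 0 hpq, fun h => absurd h (by decide), fun _ => rfl, fun _ => rfl⟩
    exact Prod.ext ((mem_lawrenceLift _).1 hs).2.1.symm rfl
  · rintro hinj ⟨x, y, z⟩ ⟨t, ht, htx, hty, -⟩ ⟨u, hu, -, huy, huz⟩
    obtain ⟨rfl, rfl, rfl⟩ : x = t.1 ∧ y = t.2.1 ∧ z = u.2.2 :=
      ⟨htx (by decide), hty (by decide), huz (by decide)⟩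
    obtain ⟨htε, htp, htq⟩ := (mem_lawrenceLift t).1 ht
    obtain ⟨-, -, huq⟩ := (mem_lawrenceLift u).1 hu
    have htu : t.2.2.val = u.2.2.val :=
      hinj t.2.2.2 u.2.2.2 (by rw [← htq, ← huq, huy (by decide)])
    exact (mem_lawrenceLift _).2 ⟨htε, by rw [htp, htu], by rw [huy (by decide), huq]⟩

lemma not_isCTFP3_lawrenceLift (hS : S.Nonempty) :
    ¬ IsCTFP3 (lawrenceLift S) {0, 2} {1, 2} := by
  obtain ⟨⟨p, q⟩, hpq⟩ := hS
  intro h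
  have hs := (h ((0, p), (1, q), ⟨(p, q), hpq⟩)).2
    ⟨⟨_, mk_mem_lawrenceLift 0 hpq, fun _ => rfl, fun h => absurd h (by decide), fun _ => rfl⟩,
     ⟨_, mk_mem_lawrenceLift 1 hpq, fun h => absurd h (by decide), fun _ => rfl, fun _ => rfl⟩⟩
  exact zero_ne_one ((mem_lawrenceLift _).1 hs).1

end LawrenceLift

theorem stmt9 {m n : ℕ} (S : Finset (Fin m × Fin n)) (hS : S.Nonempty) :
    (∃ (j : Fin 3) (a : Finset (Fin 3)), {j} ⊂ a ∧ a ⊂ Finset.univ ∧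
        IsCTFP3 (lawrenceLift S) a ((Finset.univ \ a) ∪ {j})) ↔
      (Set.InjOn (Prod.fst : Fin m × Fin n → Fin m) (S : Set (Fin m × Fin n)) ∨
        Set.InjOn (Prod.snd : Fin m × Fin n → Fin n) (S : Set (Fin m × Fin n))) := by
  rw [exists_properSplit_iff (IsCTFP3 (lawrenceLift S)) fun _ _ => IsCTFP3.symm,
    isCTFP3_lawrenceLift_iff_injOn_fst,
    isCTFP3_lawrenceLift_iff_injOn_snd]
  simp only [not_isCTFP3_lawrenceLift hS, or_false]
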